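/- arXiv:1302.4498 — 2 statements merged into one kernel-verified Lean document; each statement's English description precedes it below -/
import Mathlib

section
/- Let p > 3 be a prime, F = F_{p^r}, and let L1, L2, L3 : F → F be additive polynomial functions. If the product A(x) = L1(x)·L2(x)·L3(x) is an Alltop function on F, then L1, L2 and L3 are all bijections of F. -/
open Finset

/-- The difference function `Δ_{f,a}(x) = f(x+a) - f(x)`. -/
def deltaFn {F : Type*} [Field F] (f : F → F) (a : F) : F → F := fun x => f (x + a) - f x

/-- `f` is planar if `Δ_{f,a}` is a bijection for every `a ≠ 0`. -/
def IsPlanar {F : Type*} [Field F] (f : F → F) : Prop :=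
  ∀ a : F, a ≠ 0 → Function.Bijective (deltaFn f a)

/-- `f` is an Alltop function if `Δ_{f,a}` is planar for every `a ≠ 0`. -/
def IsAlltop {F : Type*} [Field F] (f : F → F) : Prop :=
  ∀ a : F, a ≠ 0 → IsPlanar (deltaFn f a)

/-- `L` is additive if `L(x+y) = L(x) + L(y)`. -/
def IsAdditive {F : Type*} [Field F] (L : F → F) : Prop :=
  ∀ x y : F, L (x + y) = L x + L y

/-- `l` is affine if `l = L + c` for an additive `L` and a constant `c`. -/
def IsAffine {F : Type*} [Field F] (l : F → F) : Prop :=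
  ∃ L : F → F, ∃ c : F, IsAdditive L ∧ ∀ x, l x = L x + c

/-- Extended affine (EA) equivalence: `f(x) = l1(g(l2(x))) + l3(x)` with
`l1, l2, l3` affine and `l1, l2` bijections. -/
def EAEquiv {F : Type*} [Field F] (f g : F → F) : Prop :=
  ∃ l1 l2 l3 : F → F, IsAffine l1 ∧ IsAffine l2 ∧ IsAffine l3 ∧
    Function.Bijective l1 ∧ Function.Bijective l2 ∧ ∀ x, f x = l1 (g (l2 x)) + l3 x

/-- A Dembowski–Ostrom polynomial function on `F_{p^r}`:
`f(x) = ∑_{i,j=0}^{r-1} a_{ij} x^{p^i + p^j}`. -/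
def IsDembowskiOstrom (p r : ℕ) [Fact p.Prime] (f : GaloisField p r → GaloisField p r) : Prop :=
  ∃ a : ℕ → ℕ → GaloisField p r,
    ∀ x, f x = ∑ i ∈ Finset.range r, ∑ j ∈ Finset.range r, a i j * x ^ (p ^ i + p ^ j)


/-!
If `L` is additive and `L a = 0` for some `a ≠ 0`, then `L` is `a`-periodic, so the second
difference `Δ_a Δ_a (L · g)` vanishes wherever `L` does, in particular at `0` and at `a`.
For an Alltop function this second difference is injective, so every additive factor of an
Alltop function has trivial kernel, and over a finite field it is a bijection.
-/

variable {F : Type*} [Field F] {L g : F → F}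

theorem IsAdditive.map_zero (hL : IsAdditive L) : L 0 = 0 := by
  simpa using hL 0 0

theorem IsAdditive.map_sub (hL : IsAdditive L) (x y : F) : L (x - y) = L x - L y :=
  eq_sub_of_add_eq (by rw [← hL, sub_add_cancel])

theorem IsAdditive.deltaFn_deltaFn_mul_eq_zero (hL : IsAdditive L) {a x : F} (ha : L a = 0)
    (hx : L x = 0) : deltaFn (deltaFn (fun y => L y * g y) a) a x = 0 := by
  have hxa : L (x + a) = 0 := by rw [hL, hx, ha, add_zero]
  have hxaa : L (x + a + a) = 0 := by rw [hL, hxa, ha, add_zero]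
  simp only [deltaFn, hx, hxa, hxaa, zero_mul, sub_self]

theorem IsAlltop.injective_of_isAdditive_mul (hL : IsAdditive L)
    (hA : IsAlltop (fun x => L x * g x)) : Function.Injective L := by
  intro x y hxy
  by_contra hne
  have hxy' : x - y ≠ 0 := sub_ne_zero_of_ne hne
  have hker : L (x - y) = 0 := by rw [hL.map_sub, hxy, sub_self]
  have hzero : 0 = x - y := (hA _ hxy' _ hxy').injective <|
    (hL.deltaFn_deltaFn_mul_eq_zero hker hL.map_zero).trans
      (hL.deltaFn_deltaFn_mul_eq_zero hker hker).symm
  exact hxy' hzero.symm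

theorem additive_triple_product_alltop_imp_bijective_general (p r : ℕ) [Fact p.Prime]
    (L1 L2 L3 : GaloisField p r → GaloisField p r)
    (hL1 : IsAdditive L1) (hL2 : IsAdditive L2) (hL3 : IsAdditive L3)
    (hA : IsAlltop (fun x => L1 x * L2 x * L3 x)) :
    Function.Bijective L1 ∧ Function.Bijective L2 ∧ Function.Bijective L3 := by
  have h1 : IsAlltop (fun x => L1 x * (L2 x * L3 x)) := by
    simpa only [mul_assoc] using hA
  have h2 : IsAlltop (fun x => L2 x * (L1 x * L3 x)) := by
    simpa only [mul_left_comm (L2 _), mul_assoc] using hA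
  have h3 : IsAlltop (fun x => L3 x * (L1 x * L2 x)) := by
    simpa only [mul_comm (L3 _), mul_assoc] using hA
  exact ⟨Finite.injective_iff_bijective.mp (h1.injective_of_isAdditive_mul hL1),
    Finite.injective_iff_bijective.mp (h2.injective_of_isAdditive_mul hL2),
    Finite.injective_iff_bijective.mp (h3.injective_of_isAdditive_mul hL3)⟩

theorem additive_triple_product_alltop_imp_bijective (p r : ℕ) [Fact p.Prime] (hp : 3 < p)
    (hr : 0 < r) (L1 L2 L3 : GaloisField p r → GaloisField p r)
    (hL1 : IsAdditive L1) (hL2 : IsAdditive L2) (hL3 : IsAdditive L3)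
    (hA : IsAlltop (fun x => L1 x * L2 x * L3 x)) :
    Function.Bijective L1 ∧ Function.Bijective L2 ∧ Function.Bijective L3 :=
  additive_triple_product_alltop_imp_bijective_general p r L1 L2 L3 hL1 hL2 hL3 hA
end

section
/- Let q = p^m with p ≥ 5 prime and let A : F_q → F_q be an Alltop function. For a, b ∈ F_q define v_{ab} ∈ ℂ^{F_q} by v_{ab}(x) = (1/√q)·χ(A(x+a) + b(x+a)), where χ(x) = e^{2πi·tr(x)/p} and tr : F_q → F_p is the absolute trace. Let C_A = {v_{ab} : a, b ∈ F_q} ∪ E, where E is the standard basis of ℂ^{F_q}. Then C_A is a set of q^2 + q unit vectors in ℂ^q whose maximum correlation amplitude satisfies I_max(C_A) = 1/√q. -/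
/-!
Write `ψ = χ` as an additive character of `F_q`. Substituting `y = x + a`, the correlation of
`v_{ab}` and `v_{a'b'}` is `q⁻¹ ∑_y ψ(Δ_{A,a'-a}(y) + (b'-b)y + b'(a'-a))`. For `a ≠ a'` the
argument is a planar function, and expanding `|∑ ψ(f)|²` as `∑_d ∑_y ψ(Δ_{f,d}(y))` shows that
every planar exponential sum has modulus exactly `√q`. For `a = a'`, `b ≠ b'` the argument is a
linear bijection, so the sum vanishes. The correlation of `v_{ab}` with `e_y` is an entry of
`v_{ab}`, of modulus `1/√q`. As `1/√q < 1`, the `q² + q` vectors are pairwise distinct.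
-/

open Finset

/-- The additive character `χ(x) = e^{2πi·tr(x)/p}` of `F_{p^m}`, where `tr` is the
absolute trace to `F_p = ZMod p`. -/
noncomputable def chi (p m : ℕ) [Fact p.Prime] (x : GaloisField p m) : ℂ :=
  Complex.exp (2 * Real.pi * Complex.I *
    ((Algebra.trace (ZMod p) (GaloisField p m) x).val : ℂ) / (p : ℂ))

/-- The standard Hermitian inner product `⟨u, w⟩ = ∑ x, conj (u x) * w x` on `ℂ^F`. -/
noncomputable def herm {F : Type*} [Fintype F] (u w : F → ℂ) : ℂ :=
  ∑ x : F, (starRingEnd ℂ) (u x) * w x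

/-- The Alltop-type vector `v_{ab}(x) = q^{-1/2} χ(A(x+a) + b(x+a))` in `ℂ^{F_q}`,
`q = p^m`. -/
noncomputable def alltopVec (p m : ℕ) [Fact p.Prime]
    (A : GaloisField p m → GaloisField p m) (a b : GaloisField p m) :
    GaloisField p m → ℂ :=
  fun x => ((1 / Real.sqrt ((p : ℝ) ^ m) : ℝ) : ℂ) * chi p m (A (x + a) + b * (x + a))

open scoped Classical in
/-- The standard basis vector `e_y` of `ℂ^{F_q}`. -/
noncomputable def stdVec (p m : ℕ) [Fact p.Prime] (y : GaloisField p m) : GaloisField p m → ℂ :=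
  fun x => if x = y then 1 else 0

noncomputable def traceChar (p m : ℕ) [Fact p.Prime] : AddChar (GaloisField p m) ℂ :=
  ZMod.stdAddChar.compAddMonoidHom (Algebra.trace (ZMod p) (GaloisField p m)).toAddMonoidHom

lemma chi_eq_traceChar (p m : ℕ) [Fact p.Prime] : chi p m = traceChar p m := by
  ext x
  have h := ZMod.stdAddChar_coe (N := p) ((Algebra.trace (ZMod p) (GaloisField p m) x).val : ℤ)
  rw [Int.cast_natCast, ZMod.natCast_zmod_val] at h
  rw [chi, traceChar, AddChar.compAddMonoidHom_apply, LinearMap.toAddMonoidHom_coe, h]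
  push_cast
  rfl

lemma traceChar_ne_one (p m : ℕ) [Fact p.Prime] : traceChar p m ≠ 1 := by
  obtain ⟨x, hx⟩ := Algebra.trace_surjective (ZMod p) (GaloisField p m) 1
  refine AddChar.ne_one_iff.2 ⟨x, ?_⟩
  rw [traceChar, AddChar.compAddMonoidHom_apply, LinearMap.toAddMonoidHom_coe, hx,
    ← (ZMod.stdAddChar (N := p)).map_zero_eq_one, ZMod.injective_stdAddChar.ne_iff]
  exact one_ne_zero

section Planar

variable {F : Type*} [Field F]

lemma IsPlanar.add_linear_add_const {f : F → F} (hf : IsPlanar f) (c β : F) :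
    IsPlanar fun x => f x + c * x + β := by
  intro a ha
  have hΔ : deltaFn (fun x => f x + c * x + β) a = fun x => deltaFn f a x + c * a := by
    ext x
    simp only [deltaFn]
    ring
  rw [hΔ]
  exact (Equiv.addRight (c * a)).bijective.comp (hf a ha)

end Planar

section AddChar

variable {F : Type*} [Field F] [Fintype F] {ψ : AddChar F ℂ}

lemma AddChar.sum_comp_bijective_eq_zero (hψ : ψ ≠ 1) {g : F → F} (hg : g.Bijective) :
    ∑ x, ψ (g x) = 0 := by
  rw [Fintype.sum_bijective g hg _ _ fun _ => rfl]
  exact AddChar.sum_eq_zero_of_ne_one hψ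

lemma AddChar.norm_sum_comp_of_isPlanar (hψ : ψ ≠ 1) {f : F → F} (hf : IsPlanar f) :
    ‖∑ x, ψ (f x)‖ = √(Fintype.card F) := by
  have hsq : (Complex.normSq (∑ x, ψ (f x)) : ℂ) = Fintype.card F :=
    calc (Complex.normSq (∑ x, ψ (f x)) : ℂ)
        = ∑ x, ∑ y, ψ (f x - f y) := by
          simp only [← Complex.mul_conj, map_sum, Finset.sum_mul_sum, AddChar.map_sub_eq_div,
            div_eq_mul_inv, AddChar.inv_apply_eq_conj]
      _ = ∑ y, ∑ d, ψ (deltaFn f d y) := by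
          rw [Finset.sum_comm]
          refine Finset.sum_congr rfl fun y _ => ?_
          exact (Fintype.sum_equiv (Equiv.addLeft y) _ _ fun d => rfl).symm
      _ = ∑ d, ∑ y, ψ (deltaFn f d y) := Finset.sum_comm
      _ = Fintype.card F := by
          rw [Finset.sum_eq_single 0]
          · simp [deltaFn]
          · intro d _ hd
            exact AddChar.sum_comp_bijective_eq_zero hψ (hf d hd)
          · simp
  rw [Complex.norm_def, (by exact_mod_cast hsq : Complex.normSq _ = Fintype.card F)]

lemma AddChar.sum_alltop_sub_eq_sum_deltaFn (ψ : AddChar F ℂ) (A : F → F) (a b a' b' : F) :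
    ∑ x, ψ (A (x + a') + b' * (x + a') - (A (x + a) + b * (x + a))) =
      ∑ y, ψ (deltaFn A (a' - a) y + (b' - b) * y + b' * (a' - a)) := by
  refine Fintype.sum_equiv (Equiv.addRight a) _ _ fun x => ?_
  rw [Equiv.coe_addRight, deltaFn, show x + a + (a' - a) = x + a' by ring]
  ring_nf

lemma AddChar.norm_sum_alltop_sub_le (hψ : ψ ≠ 1) {A : F → F} (hA : IsAlltop A)
    {a b a' b' : F} (h : (a, b) ≠ (a', b')) :
    ‖∑ x, ψ (A (x + a') + b' * (x + a') - (A (x + a) + b * (x + a)))‖ ≤ √(Fintype.card F) := by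
  rw [ψ.sum_alltop_sub_eq_sum_deltaFn]
  rcases eq_or_ne a a' with rfl | ha
  · have hb : b' - b ≠ 0 := sub_ne_zero.2 fun hb => h (by rw [hb])
    have hlin (y : F) : deltaFn A (a - a) y + (b' - b) * y + b' * (a - a) = (b' - b) * y := by
      simp [deltaFn]
    simp_rw [hlin]
    rw [AddChar.sum_comp_bijective_eq_zero hψ (mulLeft_bijective₀ _ hb), norm_zero]
    positivity
  · exact (AddChar.norm_sum_comp_of_isPlanar hψ
      ((hA _ (sub_ne_zero.2 ha.symm)).add_linear_add_const _ _)).le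

lemma herm_const_mul_addChar (ψ : AddChar F ℂ) (c : ℝ) (g h : F → F) :
    herm (fun x => (c : ℂ) * ψ (g x)) (fun x => (c : ℂ) * ψ (h x)) =
      ((c ^ 2 : ℝ) : ℂ) * ∑ x, ψ (h x - g x) := by
  rw [herm, Finset.mul_sum]
  refine Finset.sum_congr rfl fun x _ => ?_
  rw [map_mul, Complex.conj_ofReal, ← AddChar.map_neg_eq_conj, sub_eq_neg_add,
    AddChar.map_add_eq_mul]
  push_cast
  ring

end AddChar

lemma signalSet_range_of_herm_bounds {ι F : Type*} [Finite ι] [Fintype F] (w : ι → F → ℂ) {c : ℝ}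
    (hc : c < 1) (hunit : ∀ i, herm (w i) (w i) = 1)
    (hcorr : ∀ i j, i ≠ j → ‖herm (w i) (w j)‖ ≤ c)
    (hattain : ∃ i j, i ≠ j ∧ ‖herm (w i) (w j)‖ = c) :
    (Set.range w).ncard = Nat.card ι ∧ (∀ u ∈ Set.range w, herm u u = 1) ∧
      IsGreatest {t : ℝ | ∃ u ∈ Set.range w, ∃ v ∈ Set.range w, u ≠ v ∧ t = ‖herm u v‖} c := by
  have hinj : w.Injective := by
    intro i j hij
    by_contra hne
    have := hcorr i j hne
    rw [← hij, hunit, norm_one] at this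
    linarith
  refine ⟨Set.ncard_range_of_injective hinj, ?_, ?_, ?_⟩
  · rintro _ ⟨i, rfl⟩
    exact hunit i
  · obtain ⟨i, j, hij, hc⟩ := hattain
    exact ⟨w i, ⟨i, rfl⟩, w j, ⟨j, rfl⟩, hinj.ne hij, hc.symm⟩
  · rintro _ ⟨_, ⟨i, rfl⟩, _, ⟨j, rfl⟩, hij, rfl⟩
    exact hcorr i j fun h => hij (congrArg w h)

section AlltopSignalSet

variable {p m : ℕ} [Fact p.Prime]

lemma alltopVec_eq (A : GaloisField p m → GaloisField p m) (a b : GaloisField p m) :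
    alltopVec p m A a b =
      fun x => ((1 / √((p : ℝ) ^ m) : ℝ) : ℂ) * traceChar p m (A (x + a) + b * (x + a)) := by
  rw [← chi_eq_traceChar]
  rfl

lemma norm_alltopVec_apply (A : GaloisField p m → GaloisField p m) (a b x : GaloisField p m) :
    ‖alltopVec p m A a b x‖ = 1 / √((p : ℝ) ^ m) := by
  rw [alltopVec, norm_mul, chi_eq_traceChar, AddChar.norm_apply, mul_one, Complex.norm_real,
    Real.norm_of_nonneg (by positivity)]

noncomputable def alltopFamily (p m : ℕ) [Fact p.Prime] (A : GaloisField p m → GaloisField p m) :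
    (GaloisField p m × GaloisField p m) ⊕ GaloisField p m → GaloisField p m → ℂ :=
  Sum.elim (fun ab => alltopVec p m A ab.1 ab.2) (stdVec p m)

lemma range_alltopFamily (A : GaloisField p m → GaloisField p m) :
    Set.range (alltopFamily p m A) = {w | ∃ a b, w = alltopVec p m A a b} ∪
      {w | ∃ y, w = stdVec p m y} := by
  rw [alltopFamily, Set.Sum.elim_range]
  congr 1 <;> ext w <;> simp [eq_comm]

variable [Fintype (GaloisField p m)]

lemma card_galoisField_eq (hm : m ≠ 0) : (Fintype.card (GaloisField p m) : ℝ) = (p : ℝ) ^ m := by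
  rw [← Nat.card_eq_fintype_card, GaloisField.card p m hm]
  push_cast
  rfl

lemma herm_alltopVec (A : GaloisField p m → GaloisField p m) (a b a' b' : GaloisField p m) :
    herm (alltopVec p m A a b) (alltopVec p m A a' b') =
      (((p : ℝ) ^ m)⁻¹ : ℝ) * ∑ x, traceChar p m
        (A (x + a') + b' * (x + a') - (A (x + a) + b * (x + a))) := by
  have hq : (0 : ℝ) ≤ (p : ℝ) ^ m := by positivity
  rw [alltopVec_eq, alltopVec_eq, herm_const_mul_addChar, div_pow, one_pow, Real.sq_sqrt hq,
    one_div]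

lemma herm_alltopVec_self (hm : m ≠ 0) (A : GaloisField p m → GaloisField p m)
    (a b : GaloisField p m) : herm (alltopVec p m A a b) (alltopVec p m A a b) = 1 := by
  have hq : (p : ℝ) ^ m ≠ 0 := by have := (Fact.out : p.Prime).pos; positivity
  rw [herm_alltopVec]
  simp only [sub_self, AddChar.map_zero_eq_one, Finset.sum_const, Finset.card_univ,
    nsmul_eq_mul, mul_one]
  rw [← Complex.ofReal_natCast, card_galoisField_eq hm, ← Complex.ofReal_mul, inv_mul_cancel₀ hq,
    Complex.ofReal_one]

lemma norm_herm_alltopVec_le (hm : m ≠ 0) {A : GaloisField p m → GaloisField p m}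
    (hA : IsAlltop A) {a b a' b' : GaloisField p m} (h : (a, b) ≠ (a', b')) :
    ‖herm (alltopVec p m A a b) (alltopVec p m A a' b')‖ ≤ 1 / √((p : ℝ) ^ m) := by
  have hq : (0 : ℝ) < (p : ℝ) ^ m := by have := (Fact.out : p.Prime).pos; positivity
  rw [herm_alltopVec, norm_mul, Complex.norm_real, Real.norm_of_nonneg (by positivity)]
  calc ((p : ℝ) ^ m)⁻¹ * ‖∑ x, traceChar p m
          (A (x + a') + b' * (x + a') - (A (x + a) + b * (x + a)))‖
      ≤ ((p : ℝ) ^ m)⁻¹ * √((p : ℝ) ^ m) := by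
        rw [← card_galoisField_eq hm]
        gcongr
        exact AddChar.norm_sum_alltop_sub_le (traceChar_ne_one p m) hA h
    _ = 1 / √((p : ℝ) ^ m) := by
        have hs := Real.sqrt_pos.2 hq
        field_simp
        rw [Real.sq_sqrt hq.le]

lemma herm_stdVec_left (y : GaloisField p m) (w : GaloisField p m → ℂ) :
    herm (stdVec p m y) w = w y := by
  classical
  simp [herm, stdVec]

lemma herm_stdVec_right (w : GaloisField p m → ℂ) (y : GaloisField p m) :
    herm w (stdVec p m y) = starRingEnd ℂ (w y) := by
  classical
  simp [herm, stdVec]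

lemma herm_alltopFamily_self (hm : m ≠ 0) (A : GaloisField p m → GaloisField p m) (i) :
    herm (alltopFamily p m A i) (alltopFamily p m A i) = 1 := by
  rcases i with ⟨a, b⟩ | y
  · exact herm_alltopVec_self hm A a b
  · simp [alltopFamily, herm_stdVec_left, stdVec]

lemma norm_herm_alltopFamily_le (hm : m ≠ 0) {A : GaloisField p m → GaloisField p m}
    (hA : IsAlltop A) (i j) (hij : i ≠ j) :
    ‖herm (alltopFamily p m A i) (alltopFamily p m A j)‖ ≤ 1 / √((p : ℝ) ^ m) := by
  rcases i with ⟨a, b⟩ | y <;> rcases j with ⟨a', b'⟩ | y'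
  · exact norm_herm_alltopVec_le hm hA fun h => hij (congrArg Sum.inl h)
  · simp only [alltopFamily, Sum.elim_inl, Sum.elim_inr, herm_stdVec_right, Complex.norm_conj,
      norm_alltopVec_apply, le_refl]
  · simp only [alltopFamily, Sum.elim_inl, Sum.elim_inr, herm_stdVec_left, norm_alltopVec_apply,
      le_refl]
  · have hy : y ≠ y' := fun h => hij (congrArg Sum.inr h)
    simp only [alltopFamily, Sum.elim_inr]
    rw [herm_stdVec_left, stdVec, if_neg hy, norm_zero]
    positivity

end AlltopSignalSet

theorem alltop_signal_set_general (p m : ℕ) [Fact p.Prime] [Fintype (GaloisField p m)]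
    (hm : 0 < m) (A : GaloisField p m → GaloisField p m) (hA : IsAlltop A)
    (C : Set (GaloisField p m → ℂ))
    (hC : C = {w | ∃ a b : GaloisField p m, w = alltopVec p m A a b} ∪
              {w | ∃ y : GaloisField p m, w = stdVec p m y}) :
    -- C consists of q^2 + q unit vectors
    C.ncard = (p ^ m) ^ 2 + p ^ m ∧
    (∀ w ∈ C, herm w w = 1) ∧
    -- and its maximum correlation amplitude is 1/√q
    IsGreatest {t : ℝ | ∃ u ∈ C, ∃ w ∈ C, u ≠ w ∧ t = ‖herm u w‖}
      (1 / Real.sqrt ((p : ℝ) ^ m)) := by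
  have hq : 1 < √((p : ℝ) ^ m) := by
    rw [Real.lt_sqrt zero_le_one, one_pow]
    exact one_lt_pow₀ (Nat.one_lt_cast.2 (Fact.out : p.Prime).one_lt) hm.ne'
  have hattain : ‖herm (alltopFamily p m A (.inl (0, 0))) (alltopFamily p m A (.inr 0))‖ =
      1 / √((p : ℝ) ^ m) := by
    simp only [alltopFamily, Sum.elim_inl, Sum.elim_inr, herm_stdVec_right, Complex.norm_conj,
      norm_alltopVec_apply]
  obtain ⟨hcard, hunit, hmax⟩ := signalSet_range_of_herm_bounds (alltopFamily p m A)
    ((div_lt_one (by positivity)).2 hq) (herm_alltopFamily_self hm.ne' A)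
    (norm_herm_alltopFamily_le hm.ne' hA) ⟨_, _, Sum.inl_ne_inr, hattain⟩
  rw [range_alltopFamily, ← hC] at hcard hunit hmax
  refine ⟨?_, hunit, hmax⟩
  rw [hcard, Nat.card_sum, Nat.card_prod, GaloisField.card p m hm.ne', sq]

theorem alltop_signal_set (p m : ℕ) [Fact p.Prime] [Fintype (GaloisField p m)]
    (hp : 5 ≤ p) (hm : 0 < m) (A : GaloisField p m → GaloisField p m) (hA : IsAlltop A)
    (C : Set (GaloisField p m → ℂ))
    (hC : C = {w | ∃ a b : GaloisField p m, w = alltopVec p m A a b} ∪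
              {w | ∃ y : GaloisField p m, w = stdVec p m y}) :
    -- C consists of q^2 + q unit vectors
    C.ncard = (p ^ m) ^ 2 + p ^ m ∧
    (∀ w ∈ C, herm w w = 1) ∧
    -- and its maximum correlation amplitude is 1/√q
    IsGreatest {t : ℝ | ∃ u ∈ C, ∃ w ∈ C, u ≠ w ∧ t = ‖herm u w‖}
      (1 / Real.sqrt ((p : ℝ) ^ m)) :=
  alltop_signal_set_general p m hm A hA C hC
end
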